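/- For every natural number n, α(γ(n)) = n, where γ is the standard RPF natural spelling function and α is the standard RPF natural evaluation function; i.e., α restricted to the image of γ is the inverse of γ. -/

import Mathlib

/-- The standard RPF natural spelling function.  `true` = '(' and `false` = ')'.
For `n ≥ 2`, `γ n` is the concatenation over `i = 0, …, m-1` of `"(" ++ γ aᵢ ++ ")"`,
where `aᵢ` is the exponent of the `i`-th prime (`Nat.nth Nat.Prime i`, 0-indexed, so the
0th prime is 2) in the factorization of `n`, and the `(m-1)`-st prime is the greatest
prime factor of `n` (so `m = Nat.count Nat.Prime (gpf n) + 1`). -/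
noncomputable def gamma : ℕ → List Bool
  | 0 => []
  | 1 => [true, false]
  | (n+2) =>
    ((List.range (Nat.count Nat.Prime ((n+2).factorization.support.sup id) + 1)).map
      (fun i => (true :: gamma ((n+2).factorization (Nat.nth Nat.Prime i))) ++ [false])).flatten
termination_by n => n
decreasing_by exact Nat.factorization_lt _ (by omega)

/-- Length of the first chunk of `w` (smallest positive `k` such that the first `k`
symbols are balanced); `0` if no such `k` exists. -/
noncomputable def firstChunkLen (w : List Bool) : ℕ :=
  sInf {k | 0 < k ∧ (w.take k).count true = (w.take k).count false}

/-- Auxiliary evaluator: `alphaAux i w` is `∏ⱼ p_{i+j} ^ α(dⱼ)` over the chunks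
`(d₀)(d₁)…` of `w`, where `α(ε) = 0`. -/
noncomputable def alphaAux (i : ℕ) (w : List Bool) : ℕ :=
  if w = [] then 1
  else if 0 < firstChunkLen w then
    (Nat.nth Nat.Prime i) ^
        (if ((w.take (firstChunkLen w)).drop 1).dropLast = [] then 0
         else alphaAux 0 (((w.take (firstChunkLen w)).drop 1).dropLast))
      * alphaAux (i+1) (w.drop (firstChunkLen w))
  else 1
termination_by w.length
decreasing_by
  · simp only [List.length_dropLast, List.length_drop, List.length_take]
    rename_i hw _; cases w <;> simp_all <;> omega
  · simp only [List.length_drop]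
    rename_i hw hc; cases w <;> simp_all <;> omega

/-- The standard RPF natural evaluation function `α : 𝒟 → ℕ`:
`α ε = 0` and `α w = ∏ᵢ pᵢ ^ α(dᵢ)` over the chunks `(dᵢ)` of `w`. -/
noncomputable def alpha (w : List Bool) : ℕ := if w = [] then 0 else alphaAux 0 w

/-! `γ n` is a concatenation of chunks `(γ aᵢ)`, one for each prime `pᵢ` up to the greatest
prime factor of `n`, with `aᵢ` the exponent of `pᵢ` in `n`. Every `γ a` is a Dyck word, so the
first chunk of `(d) ++ rest` is exactly `(d)`, and `α` peels the chunks off one at a time: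
`α (γ n) = ∏ pᵢ ^ α (γ aᵢ)`. By strong induction `α (γ aᵢ) = aᵢ`, and the product is the
prime factorization of `n`. -/

def IsDyck (w : List Bool) : Prop :=
  w.count true = w.count false ∧ ∀ k, (w.take k).count false ≤ (w.take k).count true

section Wrap

variable {d rest : List Bool}

lemma take_wrap_append_of_le {k : ℕ} (hk : 0 < k) (hkd : k ≤ d.length + 1) :
    (true :: d ++ false :: rest).take k = true :: d.take (k - 1) := by
  rw [List.cons_append, List.take_cons hk, List.take_append_of_le_length (by omega)]

lemma take_wrap_append :
    (true :: d ++ false :: rest).take (d.length + 2) = true :: d ++ [false] := by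
  rw [show true :: d ++ false :: rest = (true :: d ++ [false]) ++ rest by simp,
    List.take_append_of_le_length (by simp), List.take_of_length_le (by simp)]

lemma drop_wrap_append : (true :: d ++ false :: rest).drop (d.length + 2) = rest := by
  rw [show true :: d ++ false :: rest = (true :: d ++ [false]) ++ rest by simp]
  exact List.drop_left' (by simp)

end Wrap

namespace IsDyck

lemma nil : IsDyck [] := by constructor <;> simp

lemma append {a b : List Bool} (ha : IsDyck a) (hb : IsDyck b) : IsDyck (a ++ b) := by
  refine ⟨by simp [List.count_append, ha.1, hb.1], fun k => ?_⟩
  rcases le_or_gt k a.length with h | h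
  · rw [List.take_append_of_le_length h]
    exact ha.2 k
  · rw [List.take_append, List.take_of_length_le h.le]
    simp only [List.count_append]
    have := hb.2 (k - a.length)
    have := ha.1
    omega

lemma wrap {d : List Bool} (hd : IsDyck d) : IsDyck (true :: d ++ [false]) := by
  refine ⟨by simp [List.count_append, hd.1], fun k => ?_⟩
  rcases Nat.eq_zero_or_pos k with rfl | hk
  · simp
  rcases le_or_gt k (d.length + 1) with h | h
  · rw [take_wrap_append_of_le hk h]
    have := hd.2 (k - 1)
    simp only [List.count_cons]
    norm_num
    omega
  · rw [List.take_of_length_le (by simp; omega)]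
    simp [List.count_append, hd.1]

lemma flatten {L : List (List Bool)} (h : ∀ d ∈ L, IsDyck d) : IsDyck L.flatten := by
  induction L with
  | nil => exact nil
  | cons a t ih =>
    exact (h a List.mem_cons_self).append (ih fun d hd => h d (List.mem_cons_of_mem a hd))

end IsDyck

lemma isDyck_gamma (n : ℕ) : IsDyck (gamma n) := by
  induction n using Nat.strong_induction_on with
  | _ n ih =>
    match n with
    | 0 => rw [gamma]; exact IsDyck.nil
    | 1 => rw [gamma]; exact IsDyck.nil.wrap
    | k + 2 =>
      rw [gamma]
      refine IsDyck.flatten fun d hd => ?_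
      obtain ⟨j, -, rfl⟩ := List.mem_map.1 hd
      exact (ih _ (Nat.factorization_lt _ (by omega))).wrap

section Chunks

variable {d rest : List Bool}

lemma firstChunkLen_wrap_append (hd : IsDyck d) :
    firstChunkLen (true :: d ++ false :: rest) = d.length + 2 := by
  have hmem : d.length + 2 ∈ {k | 0 < k ∧ ((true :: d ++ false :: rest).take k).count true
      = ((true :: d ++ false :: rest).take k).count false} := by
    refine ⟨by omega, ?_⟩
    rw [take_wrap_append]
    simp [List.count_append, hd.1]
  refine le_antisymm (Nat.sInf_le hmem) (le_csInf ⟨_, hmem⟩ ?_)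
  rintro k ⟨hk, hbal⟩
  by_contra! hlt
  rw [take_wrap_append_of_le hk (by omega)] at hbal
  have := hd.2 (k - 1)
  simp only [List.count_cons] at hbal
  norm_num at hbal
  omega

lemma alphaAux_nil (i : ℕ) : alphaAux i [] = 1 := by
  rw [alphaAux]
  simp

lemma alphaAux_wrap_append (i : ℕ) (hd : IsDyck d) :
    alphaAux i (true :: d ++ false :: rest) =
      Nat.nth Nat.Prime i ^ alpha d * alphaAux (i + 1) rest := by
  rw [alphaAux, if_neg (by simp), firstChunkLen_wrap_append hd, if_pos (by omega),
    take_wrap_append, drop_wrap_append,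
    show ((true :: d ++ [false]).drop 1).dropLast = d by simp, alpha]

lemma alphaAux_flatten_wrap (m i : ℕ) (f : ℕ → List Bool) (hf : ∀ j < m, IsDyck (f j)) :
    alphaAux i ((List.range m).map (fun j => true :: f j ++ [false])).flatten
      = ∏ j ∈ Finset.range m, Nat.nth Nat.Prime (i + j) ^ alpha (f j) := by
  induction m generalizing f i with
  | zero => simp [alphaAux_nil]
  | succ m ih =>
    have hsplit : ((List.range (m + 1)).map (fun j => true :: f j ++ [false])).flatten
        = true :: f 0 ++ false ::
          ((List.range m).map (fun j => true :: f (j + 1) ++ [false])).flatten := by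
      simp [List.range_succ_eq_map, Function.comp_def]
    rw [hsplit, alphaAux_wrap_append i (hf 0 (by omega)),
      ih (i + 1) (fun j => f (j + 1)) (fun j hj => hf (j + 1) (by omega)),
      Finset.prod_range_succ', mul_comm]
    simp only [add_assoc, add_comm 1, add_zero]

end Chunks

lemma prod_range_nth_prime_pow_factorization {n m : ℕ} (hn : n ≠ 0)
    (hm : ∀ p ∈ n.primeFactors, Nat.count Nat.Prime p < m) :
    ∏ j ∈ Finset.range m, Nat.nth Nat.Prime j ^ n.factorization (Nat.nth Nat.Prime j) = n := by
  have hinj : Function.Injective (Nat.nth Nat.Prime) :=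
    Nat.nth_injective Nat.infinite_setOfPred_prime
  rw [← Finset.prod_image (f := fun p => p ^ n.factorization p) fun a _ b _ h => hinj h]
  have hsub : n.primeFactors ⊆ (Finset.range m).image (Nat.nth Nat.Prime) := fun p hp =>
    Finset.mem_image.2
      ⟨_, Finset.mem_range.2 (hm p hp), Nat.nth_count (Nat.prime_of_mem_primeFactors hp)⟩
  rw [← Finset.prod_subset hsub fun p _ hp => by
    rw [← Nat.support_factorization] at hp
    rw [Finsupp.notMem_support_iff.1 hp, pow_zero]]
  exact Nat.prod_factorization_pow_eq_self hn

/-- For every natural number `n`, `α (γ n) = n`. -/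
theorem alpha_gamma : ∀ n : ℕ, alpha (gamma n) = n := by
  intro n
  induction n using Nat.strong_induction_on with
  | _ n ih =>
    match n with
    | 0 => rw [gamma]; rfl
    | 1 =>
      rw [gamma, alpha, if_neg (by simp), show [true, false] = true :: [] ++ false :: [] from rfl,
        alphaAux_wrap_append 0 IsDyck.nil, alphaAux_nil]
      simp [alpha]
    | k + 2 =>
      have hm : ∀ p ∈ (k + 2).primeFactors,
          Nat.count Nat.Prime p < Nat.count Nat.Prime ((k + 2).factorization.support.sup id) + 1 :=
        fun p hp => Nat.lt_succ_of_le <| Nat.count_monotone _ <|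
          Finset.le_sup (f := id) (by rwa [Nat.support_factorization])
      rw [gamma, alpha, if_neg (by simp [List.range_succ_eq_map]),
        alphaAux_flatten_wrap _ 0 _ fun j _ => isDyck_gamma _]
      simp only [ih _ (Nat.factorization_lt _ (by omega)), zero_add]
      exact prod_range_nth_prime_pow_factorization (by omega) hm
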